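/- arXiv:2302.06713 — 4 statements merged into one kernel-verified Lean document; each statement's English description precedes it below -/
import Mathlib

section
/- Let H be a real Hilbert space, let 0 ≤ σ < β < +∞, and let {(y_i, F_i, u_i)}_{i∈I} be a finite family of triplets in H × ℝ × H. Then the following are equivalent: (i) there exists a function f : H → ℝ that is σ-strongly convex and β-smooth such that f(y_i) = F_i and u_i ∈ ∂f(y_i) for every i ∈ I; (ii) for all i, j ∈ I one has F_i ≥ F_j + ⟨u_j, y_i − y_j⟩ + (σ/2)‖y_i − y_j‖² + (1/(2(β−σ)))‖u_i − u_j − σ(y_i − y_j)‖². -/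
/-!
Subtracting `σ/2 ‖·‖²` from the function and `σ y_i` from the subgradients reduces the theorem
to `σ = 0` and `L = β - σ`. A convex function with `L`-Lipschitz gradient lies between its
tangent planes and these planes raised by `L/2 ‖· - a‖²`; comparing the bounds at two points
yields the interpolation inequalities. Conversely, if the data satisfy them, the Moreau envelope
with parameter `L` of `max_i (F_i + ⟨u_i, · - y_i⟩ + ‖u_i‖²/(2L))` interpolates them. By
duality this envelope is a maximum over the standard simplex of quadratics that are concave in
the weights and affine in the point, which makes both tangent bounds explicit.
-/

/-- `u` is a subgradient of `f` at `x`: `f z ≥ f x + ⟨u, z - x⟩` for all `z`. -/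
def IsSubgradientAt {H : Type*} [NormedAddCommGroup H] [InnerProductSpace ℝ H]
    (f : H → ℝ) (u x : H) : Prop :=
  ∀ z : H, f x + (inner ℝ u (z - x) : ℝ) ≤ f z

/-- `f` is `σ`-strongly convex: `f - (σ/2)‖·‖²` is convex. -/
def StronglyConvex {H : Type*} [NormedAddCommGroup H] [InnerProductSpace ℝ H]
    (σ : ℝ) (f : H → ℝ) : Prop :=
  ConvexOn ℝ Set.univ (fun x => f x - σ / 2 * ‖x‖ ^ 2)

/-- `f` is `β`-smooth: differentiable with `β`-Lipschitz gradient. -/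
def IsSmoothWith {H : Type*} [NormedAddCommGroup H] [InnerProductSpace ℝ H]
    [CompleteSpace H] (β : ℝ) (f : H → ℝ) : Prop :=
  Differentiable ℝ f ∧ ∀ x y : H, ‖gradient f x - gradient f y‖ ≤ β * ‖x - y‖

open scoped RealInnerProductSpace
open Set Filter Topology

section InnerProductSpace

variable {H : Type*} [NormedAddCommGroup H] [InnerProductSpace ℝ H]

theorem real_inner_le_norm_sq_div_add {L : ℝ} (hL : 0 < L) (d e : H) :
    ⟪d, e⟫ ≤ ‖d‖ ^ 2 / (2 * L) + L / 2 * ‖e‖ ^ 2 := by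
  have h := norm_sub_sq_real d (L • e)
  rw [real_inner_smul_right, norm_smul, Real.norm_of_nonneg hL.le] at h
  rw [div_add' _ _ _ (by positivity), le_div_iff₀ (by positivity)]
  nlinarith [sq_nonneg ‖d - L • e‖]

theorem half_mul_norm_sq_eq_taylor (σ : ℝ) (a w : H) :
    σ / 2 * ‖w‖ ^ 2 = σ / 2 * ‖a‖ ^ 2 + ⟪σ • a, w - a⟫ + σ / 2 * ‖w - a‖ ^ 2 := by
  rw [real_inner_smul_left, inner_sub_right, norm_sub_sq_real, real_inner_comm w a,
    real_inner_self_eq_norm_sq]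
  ring

theorem interpolation_inequality_iff_shifted (σ c Fi Fj : ℝ) (yi yj ui uj : H) :
    Fj + ⟪uj, yi - yj⟫ + σ / 2 * ‖yi - yj‖ ^ 2 + c * ‖ui - uj - σ • (yi - yj)‖ ^ 2 ≤ Fi ↔
      Fj - σ / 2 * ‖yj‖ ^ 2 + ⟪uj - σ • yj, yi - yj⟫
        + c * ‖(ui - σ • yi) - (uj - σ • yj)‖ ^ 2 ≤ Fi - σ / 2 * ‖yi‖ ^ 2 := by
  have hsq := half_mul_norm_sq_eq_taylor σ yj yi
  rw [show (ui - σ • yi) - (uj - σ • yj) = ui - uj - σ • (yi - yj) by module, inner_sub_left]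
  constructor <;> intro h <;> linarith

theorem IsSubgradientAt.add_half_mul_norm_sq {g : H → ℝ} {u x : H} {σ : ℝ}
    (hu : IsSubgradientAt g u x) (hσ : 0 ≤ σ) :
    IsSubgradientAt (fun z => g z + σ / 2 * ‖z‖ ^ 2) (u + σ • x) x := by
  intro z
  have := hu z
  have hz := half_mul_norm_sq_eq_taylor σ x z
  have hsq : 0 ≤ σ / 2 * ‖z - x‖ ^ 2 := by positivity
  rw [inner_add_left]
  linarith

/-- For `0 < L`, these are exactly the convex functions with `L`-Lipschitz gradient `s`. -/
def IsTangentSandwich (L : ℝ) (g : H → ℝ) (s : H → H) : Prop :=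
  ∀ a w, g a + ⟪s a, w - a⟫ ≤ g w ∧ g w ≤ g a + ⟪s a, w - a⟫ + L / 2 * ‖w - a‖ ^ 2

section TangentSandwich

variable {L : ℝ} {g : H → ℝ} {s : H → H}

theorem IsTangentSandwich.convexOn (h : IsTangentSandwich L g s) : ConvexOn ℝ univ g := by
  refine ⟨convex_univ, fun a _ b _ ta tb hta htb hab => ?_⟩
  set x := ta • a + tb • b
  have hcenter : ta • (a - x) + tb • (b - x) = 0 := by
    rw [smul_sub, smul_sub, sub_add_sub_comm, ← add_smul, hab, one_smul, sub_self]
  have hinner : ta * ⟪s x, a - x⟫ + tb * ⟪s x, b - x⟫ = 0 := by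
    rw [← real_inner_smul_right, ← real_inner_smul_right, ← inner_add_right, hcenter,
      inner_zero_right]
  have ha := mul_le_mul_of_nonneg_left (h x a).1 hta
  have hb := mul_le_mul_of_nonneg_left (h x b).1 htb
  have hsplit : g x = ta * g x + tb * g x := by rw [← add_mul, hab, one_mul]
  simp only [smul_eq_mul]
  linarith

theorem IsTangentSandwich.cocoercive (h : IsTangentSandwich L g s) (hL : 0 < L) (x y : H) :
    g x + ⟪s x, y - x⟫ + 1 / (2 * L) * ‖s y - s x‖ ^ 2 ≤ g y := by
  -- `y - L⁻¹ • d` minimises the gap between the upper bound at `y` and the tangent plane at `x`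
  set d := s y - s x
  have hlow := (h x (y - L⁻¹ • d)).1
  have hup := (h y (y - L⁻¹ • d)).2
  have hd : ⟪s y, d⟫ - ⟪s x, d⟫ = ‖d‖ ^ 2 := by
    rw [← inner_sub_left, real_inner_self_eq_norm_sq]
  rw [show y - L⁻¹ • d - x = (y - x) - L⁻¹ • d by abel, inner_sub_right,
    real_inner_smul_right] at hlow
  rw [show y - L⁻¹ • d - y = -(L⁻¹ • d) by abel, inner_neg_right, norm_neg,
    real_inner_smul_right, norm_smul, Real.norm_of_nonneg (inv_nonneg.2 hL.le)] at hup
  have hL' : L ≠ 0 := hL.ne'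
  field_simp at hlow hup ⊢
  nlinarith

theorem IsTangentSandwich.norm_sub_le (h : IsTangentSandwich L g s) (hL : 0 < L) (x y : H) :
    ‖s x - s y‖ ≤ L * ‖x - y‖ := by
  have hxy := h.cocoercive hL x y
  have hyx := h.cocoercive hL y x
  have hmono : ‖s x - s y‖ ^ 2 ≤ L * ⟪s x - s y, x - y⟫ := by
    have hsum : ⟪s x - s y, x - y⟫ = -(⟪s x, y - x⟫ + ⟪s y, x - y⟫) := by
      simp only [inner_sub_left, inner_sub_right]
      ring
    rw [hsum, norm_sub_rev]
    rw [norm_sub_rev (s x)] at hyx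
    have hL' : L ≠ 0 := hL.ne'
    field_simp at hxy hyx
    linarith
  have hcs := real_inner_le_norm (s x - s y) (x - y)
  by_contra! hlt
  have hpos : 0 < ‖s x - s y‖ := lt_of_le_of_lt (by positivity) hlt
  nlinarith [mul_le_mul_of_nonneg_left hcs hL.le, mul_lt_mul_of_pos_right hlt hpos]

end TangentSandwich

theorem IsMaxOn.sub_mul_norm_sq_add_le {E : Type*} [AddCommGroup E] [Module ℝ E] {K : Set E}
    (hK : Convex ℝ K) (c : E →ₗ[ℝ] ℝ) (A : E →ₗ[ℝ] H) (κ : ℝ) {p q : E} (hp : p ∈ K)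
    (hq : q ∈ K) (hmax : IsMaxOn (fun θ => c θ - κ * ‖A θ‖ ^ 2) K p) :
    c q - κ * ‖A q‖ ^ 2 + κ * ‖A q - A p‖ ^ 2 ≤ c p - κ * ‖A p‖ ^ 2 := by
  set D := c (q - p) - 2 * κ * ⟪A p, A (q - p)⟫
  set Q := κ * ‖A (q - p)‖ ^ 2
  have hexpand : ∀ t : ℝ, c (p + t • (q - p)) - κ * ‖A (p + t • (q - p))‖ ^ 2
      = c p - κ * ‖A p‖ ^ 2 + t * D - t ^ 2 * Q := by
    intro t
    simp only [map_add, map_smul, smul_eq_mul, norm_add_sq_real, real_inner_smul_right,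
      norm_smul, Real.norm_eq_abs, mul_pow, sq_abs, D, Q]
    ring
  -- first-order optimality of `p` along the segment towards `q`
  have hD : D ≤ 0 := by
    have hlim : Tendsto (fun t : ℝ => t * Q) (𝓝[>] 0) (𝓝 0) := by
      simpa using ((continuous_id.mul_const Q).tendsto' 0 0 (zero_mul Q)).mono_left
        nhdsWithin_le_nhds
    refine ge_of_tendsto hlim ?_
    filter_upwards [Ioo_mem_nhdsGT (zero_lt_one' ℝ)] with t ht
    have hmem := hK.add_smul_sub_mem hp hq ⟨ht.1.le, ht.2.le⟩
    have := isMaxOn_iff.1 hmax _ hmem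
    simp only [hexpand] at this
    nlinarith [ht.1]
  have := hexpand 1
  simp only [one_smul, add_sub_cancel, one_mul, one_pow] at this
  rw [← map_sub]
  linarith

section Interpolant

variable {ι : Type*} [Fintype ι] (L : ℝ) (Y : ι → H) (G : ι → ℝ) (v : ι → H)

/-- Dual form of the Moreau envelope with parameter `L` of
`max_i (G i + ⟪v i, · - Y i⟫ + ‖v i‖² / (2L))`: the envelope at `x` is the maximum of
`interpolantObjective L Y G v x` over the standard simplex, and `∑ i, θ i • v i` at a maximiser
`θ` is its gradient. -/
noncomputable def interpolantObjective (x : H) (θ : ι → ℝ) : ℝ :=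
  ∑ i, θ i * (G i + ⟪v i, x - Y i⟫ + ‖v i‖ ^ 2 / (2 * L)) - (2 * L)⁻¹ * ‖∑ i, θ i • v i‖ ^ 2

theorem interpolantObjective_eq_add_inner (a w : H) (θ : ι → ℝ) :
    interpolantObjective L Y G v w θ
      = interpolantObjective L Y G v a θ + ⟪∑ i, θ i • v i, w - a⟫ := by
  simp only [interpolantObjective, sum_inner, real_inner_smul_left]
  rw [sub_add_eq_add_sub, ← Finset.sum_add_distrib]
  congr 1
  refine Finset.sum_congr rfl fun i _ => ?_
  rw [show w - Y i = (a - Y i) + (w - a) by abel, inner_add_right]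
  ring

theorem interpolantObjective_single [DecidableEq ι] (x : H) (j : ι) :
    interpolantObjective L Y G v x (Pi.single j 1) = G j + ⟪v j, x - Y j⟫ := by
  simp [interpolantObjective, Pi.single_apply]
  ring

theorem exists_isMaxOn_interpolantObjective [Nonempty ι] (x : H) :
    ∃ θ ∈ stdSimplex ℝ ι, IsMaxOn (interpolantObjective L Y G v x) (stdSimplex ℝ ι) θ := by
  classical
  refine (isCompact_stdSimplex ℝ ι).exists_isMaxOn
    ⟨_, single_mem_stdSimplex ℝ (Classical.arbitrary ι)⟩ ?_
  unfold interpolantObjective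
  fun_prop

variable {L Y G v}

theorem interpolantObjective_le_of_mem_stdSimplex (hL : 0 < L)
    (hdata : ∀ i j, G j + ⟪v j, Y i - Y j⟫ + 1 / (2 * L) * ‖v i - v j‖ ^ 2 ≤ G i)
    {θ : ι → ℝ} (hθ : θ ∈ stdSimplex ℝ ι) (j : ι) :
    interpolantObjective L Y G v (Y j) θ ≤ G j := by
  set A := G j - ‖v j‖ ^ 2 / (2 * L)
  have hL' : L ≠ 0 := hL.ne'
  have hpiece : ∀ i, G i + ⟪v i, Y j - Y i⟫ + ‖v i‖ ^ 2 / (2 * L) ≤ A + ⟪v j, v i⟫ / L := by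
    intro i
    have h := hdata j i
    have hgap : A + ⟪v j, v i⟫ / L - (G i + ⟪v i, Y j - Y i⟫ + ‖v i‖ ^ 2 / (2 * L))
        = G j - (G i + ⟪v i, Y j - Y i⟫ + 1 / (2 * L) * ‖v j - v i‖ ^ 2) := by
      simp only [A, norm_sub_sq_real]
      field_simp
      ring
    linarith
  have hsum : ∑ i, θ i * (A + ⟪v j, v i⟫ / L) = A + ⟪v j, ∑ i, θ i • v i⟫ / L := by
    simp only [inner_sum, real_inner_smul_right, mul_add, Finset.sum_add_distrib,
      ← Finset.sum_mul, hθ.2, one_mul, Finset.sum_div, mul_div_assoc]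
  have hle : ∑ i, θ i * (G i + ⟪v i, Y j - Y i⟫ + ‖v i‖ ^ 2 / (2 * L))
      ≤ A + ⟪v j, ∑ i, θ i • v i⟫ / L :=
    hsum ▸ Finset.sum_le_sum fun i _ => mul_le_mul_of_nonneg_left (hpiece i) (hθ.1 i)
  have hgap : A + ⟪v j, ∑ i, θ i • v i⟫ / L - (2 * L)⁻¹ * ‖∑ i, θ i • v i‖ ^ 2
      = G j - ‖v j - ∑ i, θ i • v i‖ ^ 2 / (2 * L) := by
    simp only [A, norm_sub_sq_real]
    field_simp
    ring
  have hnonneg : 0 ≤ ‖v j - ∑ i, θ i • v i‖ ^ 2 / (2 * L) := by positivity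
  unfold interpolantObjective
  linarith

theorem isTangentSandwich_interpolant (hL : 0 < L) {p : H → ι → ℝ}
    (hp : ∀ x, p x ∈ stdSimplex ℝ ι ∧
      IsMaxOn (interpolantObjective L Y G v x) (stdSimplex ℝ ι) (p x)) :
    IsTangentSandwich L (fun x => interpolantObjective L Y G v x (p x))
      (fun x => ∑ i, p x i • v i) := by
  intro a w
  dsimp only
  constructor
  · rw [← interpolantObjective_eq_add_inner]
    exact (hp w).2 (hp a).1
  · have hdecay := IsMaxOn.sub_mul_norm_sq_add_le (convex_stdSimplex ℝ ι)
      (Fintype.linearCombination ℝ fun i => G i + ⟪v i, a - Y i⟫ + ‖v i‖ ^ 2 / (2 * L))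
      (Fintype.linearCombination ℝ v) (2 * L)⁻¹ (hp a).1 (hp w).1 (hp a).2
    simp only [Fintype.linearCombination_apply, smul_eq_mul] at hdecay
    have hamgm := real_inner_le_norm_sq_div_add hL (∑ i, p w i • v i - ∑ i, p a i • v i) (w - a)
    rw [interpolantObjective_eq_add_inner L Y G v a w]
    unfold interpolantObjective
    rw [inner_sub_left, div_eq_inv_mul] at hamgm
    linarith

end Interpolant

theorem exists_isTangentSandwich_interpolating {ι : Type*} [Fintype ι] {L : ℝ} (hL : 0 < L)
    {Y : ι → H} {G : ι → ℝ} {v : ι → H}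
    (hdata : ∀ i j, G j + ⟪v j, Y i - Y j⟫ + 1 / (2 * L) * ‖v i - v j‖ ^ 2 ≤ G i) :
    ∃ (g : H → ℝ) (s : H → H), IsTangentSandwich L g s ∧
      ∀ j, g (Y j) = G j ∧ IsSubgradientAt g (v j) (Y j) := by
  classical
  cases isEmpty_or_nonempty ι
  · exact ⟨0, 0, fun a w => by simp; positivity, isEmptyElim⟩
  choose p hp using exists_isMaxOn_interpolantObjective L Y G v
  have hsingle : ∀ j x, G j + ⟪v j, x - Y j⟫ ≤ interpolantObjective L Y G v x (p x) :=
    fun j x => interpolantObjective_single L Y G v x j ▸ (hp x).2 (single_mem_stdSimplex ℝ j)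
  have hvalue : ∀ j, interpolantObjective L Y G v (Y j) (p (Y j)) = G j := fun j =>
    le_antisymm (interpolantObjective_le_of_mem_stdSimplex hL hdata (hp _).1 j)
      (by simpa using hsingle j (Y j))
  refine ⟨_, _, isTangentSandwich_interpolant hL hp, fun j => ⟨hvalue j, fun z => ?_⟩⟩
  dsimp only
  rw [hvalue j]
  exact hsingle j z

end InnerProductSpace

section Gradient

variable {𝕜 F : Type*} [RCLike 𝕜] [NormedAddCommGroup F] [InnerProductSpace 𝕜 F] [CompleteSpace F]
  {f g : F → 𝕜} {f' g' x : F}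

theorem HasGradientAt.add (hf : HasGradientAt f f' x) (hg : HasGradientAt g g' x) :
    HasGradientAt (fun z => f z + g z) (f' + g') x := by
  rw [hasGradientAt_iff_hasFDerivAt, map_add]
  exact hf.hasFDerivAt.add hg.hasFDerivAt

theorem HasGradientAt.sub (hf : HasGradientAt f f' x) (hg : HasGradientAt g g' x) :
    HasGradientAt (fun z => f z - g z) (f' - g') x := by
  rw [hasGradientAt_iff_hasFDerivAt, map_sub]
  exact hf.hasFDerivAt.sub hg.hasFDerivAt

end Gradient

section HilbertSpace

variable {H : Type*} [NormedAddCommGroup H] [InnerProductSpace ℝ H] [CompleteSpace H]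

theorem hasGradientAt_half_mul_norm_sq (σ : ℝ) (x : H) :
    HasGradientAt (fun z => σ / 2 * ‖z‖ ^ 2) (σ • x) x := by
  rw [hasGradientAt_iff_hasFDerivAt]
  refine ((hasStrictFDerivAt_norm_sq x).hasFDerivAt.const_mul (σ / 2)).congr_fderiv ?_
  ext z
  simp
  ring

theorem IsTangentSandwich.hasGradientAt {L : ℝ} {g : H → ℝ} {s : H → H}
    (h : IsTangentSandwich L g s) (a : H) : HasGradientAt g (s a) a := by
  rw [hasGradientAt_iff_isLittleO]
  refine Asymptotics.IsBigO.trans_isLittleO ?_ (Asymptotics.isLittleO_pow_sub_sub a one_lt_two)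
  refine Asymptotics.IsBigO.of_bound (L / 2) (Eventually.of_forall fun w => ?_)
  have hlow := (h a w).1
  have hup := (h a w).2
  rw [Real.norm_of_nonneg (by linarith), Real.norm_of_nonneg (by positivity)]
  linarith

theorem IsTangentSandwich.isSmoothWith_add_half_mul_norm_sq {L σ : ℝ} {g : H → ℝ} {s : H → H}
    (h : IsTangentSandwich L g s) (hL : 0 < L) (hσ : 0 ≤ σ) :
    IsSmoothWith (L + σ) (fun x => g x + σ / 2 * ‖x‖ ^ 2) := by
  have hgrad x := (h.hasGradientAt x).add (hasGradientAt_half_mul_norm_sq σ x)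
  refine ⟨fun x => (hgrad x).differentiableAt, fun x y => ?_⟩
  rw [(hgrad x).gradient, (hgrad y).gradient, add_sub_add_comm, ← smul_sub, add_mul]
  refine (norm_add_le _ _).trans (add_le_add (h.norm_sub_le hL x y) ?_)
  rw [norm_smul, Real.norm_of_nonneg hσ]

theorem IsSubgradientAt.eq_of_hasGradientAt {f : H → ℝ} {u s x : H}
    (hu : IsSubgradientAt f u x) (hf : HasGradientAt f s x) : u = s := by
  have hmin : IsLocalMin (fun z => f z - ⟪u, z⟫) x := Eventually.of_forall fun z => by
    have := hu z
    rw [inner_sub_right] at this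
    dsimp only
    linarith
  have h0 := hmin.hasFDerivAt_eq_zero (hf.hasFDerivAt.sub (innerSL ℝ u).hasFDerivAt)
  refine ((InnerProductSpace.toDual ℝ H).injective ?_).symm
  ext z
  have := congrArg (fun φ : H →L[ℝ] ℝ => φ z) h0
  simpa [sub_eq_zero] using this

theorem ConvexOn.add_inner_le_of_hasGradientAt {g : H → ℝ} {s a : H}
    (hg : ConvexOn ℝ univ g) (hs : HasGradientAt g s a) (w : H) :
    g a + ⟪s, w - a⟫ ≤ g w := by
  set ℓ : ℝ →ᵃ[ℝ] H := AffineMap.lineMap a w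
  have hline : ConvexOn ℝ univ (g ∘ ℓ) := by
    simpa using hg.comp_affineMap ℓ
  have hderiv : HasDerivAt (g ∘ ℓ) ⟪s, w - a⟫ 0 := by
    have := hs.hasFDerivAt.comp_hasDerivAt_of_eq (0 : ℝ) AffineMap.hasDerivAt_lineMap
      (AffineMap.lineMap_apply_zero a w).symm
    simpa using this
  have := hline.le_slope_of_hasDerivAt (mem_univ 0) (mem_univ 1) zero_lt_one hderiv
  simp [slope_def_field, ℓ] at this
  linarith

theorem IsSmoothWith.le_add_inner_add_half_mul_norm_sq {f : H → ℝ} {β : ℝ} (hf : IsSmoothWith β f)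
    (a w : H) :
    f w ≤ f a + ⟪gradient f a, w - a⟫ + β / 2 * ‖w - a‖ ^ 2 := by
  set e := w - a
  set ℓ : ℝ →ᵃ[ℝ] H := AffineMap.lineMap a w
  set φ : ℝ → ℝ := fun t => f (ℓ t) - t * ⟪gradient f a, e⟫ - β / 2 * ‖e‖ ^ 2 * t ^ 2
  have hφ : ∀ t, HasDerivAt φ
      (⟪gradient f (ℓ t), e⟫ - ⟪gradient f a, e⟫ - β / 2 * ‖e‖ ^ 2 * (2 * t)) t := by
    intro t
    have hf' := (hf.1 (ℓ t)).hasGradientAt.hasFDerivAt.comp_hasDerivAt t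
      AffineMap.hasDerivAt_lineMap
    simp only [InnerProductSpace.toDual_apply_apply] at hf'
    exact ((hf'.sub ((hasDerivAt_id t).mul_const _)).sub
      ((hasDerivAt_pow 2 t).const_mul _)).congr_deriv (by simp [e])
  have hanti : AntitoneOn φ (Icc 0 1) := by
    refine antitoneOn_of_hasDerivWithinAt_nonpos (convex_Icc 0 1)
      (fun t _ => (hφ t).continuousAt.continuousWithinAt)
      (fun t _ => (hφ t).hasDerivWithinAt) fun t ht => ?_
    rw [interior_Icc] at ht
    have hlip : ‖gradient f (ℓ t) - gradient f a‖ ≤ β * (t * ‖e‖) := by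
      simpa [ℓ, AffineMap.lineMap_apply, norm_smul, abs_of_pos ht.1] using hf.2 (ℓ t) a
    have hcs := real_inner_le_norm (gradient f (ℓ t) - gradient f a) e
    rw [inner_sub_left] at hcs
    nlinarith [norm_nonneg e]
  have := hanti (left_mem_Icc.2 zero_le_one) (right_mem_Icc.2 zero_le_one) zero_le_one
  simp only [φ, ℓ, AffineMap.lineMap_apply_zero, AffineMap.lineMap_apply_one] at this
  linarith

theorem StronglyConvex.isTangentSandwich {f : H → ℝ} {σ β : ℝ} (hconv : StronglyConvex σ f)
    (hf : IsSmoothWith β f) :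
    IsTangentSandwich (β - σ) (fun x => f x - σ / 2 * ‖x‖ ^ 2)
      (fun x => gradient f x - σ • x) := by
  intro a w
  have hgrad := (hf.1 a).hasGradientAt.sub (hasGradientAt_half_mul_norm_sq σ a)
  have hsq := half_mul_norm_sq_eq_taylor σ a w
  have hdescent := hf.le_add_inner_add_half_mul_norm_sq a w
  refine ⟨hconv.add_inner_le_of_hasGradientAt hgrad w, ?_⟩
  rw [inner_sub_left]
  linarith

end HilbertSpace

/-- Interpolation theorem for the class of `σ`-strongly convex and `β`-smooth
functions on a real Hilbert space (`0 ≤ σ < β < +∞`). -/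
theorem interpolation_smooth_strongly_convex
    {H : Type*} [NormedAddCommGroup H] [InnerProductSpace ℝ H] [CompleteSpace H]
    {ι : Type*} [Fintype ι]
    (σ β : ℝ) (hσ : 0 ≤ σ) (hσβ : σ < β)
    (y : ι → H) (F : ι → ℝ) (u : ι → H) :
    (∃ f : H → ℝ, StronglyConvex σ f ∧ IsSmoothWith β f ∧
        ∀ i, f (y i) = F i ∧ IsSubgradientAt f (u i) (y i)) ↔
      ∀ i j, F j + (inner ℝ (u j) (y i - y j) : ℝ) + σ / 2 * ‖y i - y j‖ ^ 2 +
        1 / (2 * (β - σ)) * ‖u i - u j - σ • (y i - y j)‖ ^ 2 ≤ F i := by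
  have hL : 0 < β - σ := sub_pos.2 hσβ
  simp only [interpolation_inequality_iff_shifted σ]
  constructor
  · rintro ⟨f, hconv, hsmooth, hdata⟩ i j
    have hu k : u k = gradient f (y k) :=
      (hdata k).2.eq_of_hasGradientAt (hsmooth.1 (y k)).hasGradientAt
    simpa only [hu, (hdata _).1] using (hconv.isTangentSandwich hsmooth).cocoercive hL (y j) (y i)
  · intro h
    obtain ⟨g, s, hgs, hdata⟩ := exists_isTangentSandwich_interpolating hL h
    refine ⟨fun x => g x + σ / 2 * ‖x‖ ^ 2, ?_, ?_, fun i => ⟨?_, ?_⟩⟩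
    · simpa [StronglyConvex] using hgs.convexOn
    · simpa using hgs.isSmoothWith_add_half_mul_norm_sq hL hσ
    · simp [(hdata i).1]
    · simpa using (hdata i).2.add_half_mul_norm_sq hσ
end

section
/- Let H be a real Hilbert space, let σ ≥ 0, and let {(y_i, F_i, u_i)}_{i∈I} be a finite family of triplets in H × ℝ × H. Then the following are equivalent: (i) there exists a function f : H → ℝ that is lower semicontinuous and σ-strongly convex such that f(y_i) = F_i and u_i ∈ ∂f(y_i) for every i ∈ I; (ii) for all i, j ∈ I one has F_i ≥ F_j + ⟨u_j, y_i − y_j⟩ + (σ/2)‖y_i − y_j‖². -/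
open Set Filter Topology

section StronglyConvex

variable {H : Type*} [NormedAddCommGroup H] [InnerProductSpace ℝ H] {σ : ℝ} {f g : H → ℝ}

theorem StronglyConvex.add_inner_add_sq_le {u x : H} (hf : StronglyConvex σ f)
    (hu : IsSubgradientAt f u x) (z : H) :
    f x + inner ℝ u (z - x) + σ / 2 * ‖z - x‖ ^ 2 ≤ f z := by
  have hf' : StrongConvexOn univ σ f := strongConvexOn_iff_convex.2 hf
  have hsegment : ∀ t ∈ Ioo (0 : ℝ) 1,
      f x + inner ℝ u (z - x) + (1 - t) * (σ / 2 * ‖z - x‖ ^ 2) ≤ f z := by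
    rintro t ⟨ht₀, ht₁⟩
    have hconv := hf'.2 (mem_univ x) (mem_univ z) (sub_nonneg.2 ht₁.le) ht₀.le (sub_add_cancel 1 t)
    have hsub := hu ((1 - t) • x + t • z)
    rw [show (1 - t) • x + t • z - x = t • (z - x) by module, real_inner_smul_right] at hsub
    rw [norm_sub_rev] at hconv
    simp only [smul_eq_mul] at hconv
    refine le_of_mul_le_mul_left ?_ ht₀
    linear_combination hsub + hconv
  have hlim : Tendsto (fun t : ℝ => f x + inner ℝ u (z - x) + (1 - t) * (σ / 2 * ‖z - x‖ ^ 2))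
      (𝓝[>] 0) (𝓝 (f x + inner ℝ u (z - x) + σ / 2 * ‖z - x‖ ^ 2)) := by
    refine tendsto_nhdsWithin_of_tendsto_nhds ((Continuous.tendsto' ?_ 0 _) (by simp))
    fun_prop
  exact le_of_tendsto hlim (eventually_of_mem (Ioo_mem_nhdsGT one_pos) hsegment)

theorem StronglyConvex.sup (hf : StronglyConvex σ f) (hg : StronglyConvex σ g) :
    StronglyConvex σ (f ⊔ g) :=
  (ConvexOn.sup hf hg).congr fun x _ => max_sub_sub_right (f x) (g x) _

theorem StronglyConvex.finset_sup' {ι : Type*} {s : Finset ι} (hs : s.Nonempty) {f : ι → H → ℝ}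
    (hf : ∀ i ∈ s, StronglyConvex σ (f i)) : StronglyConvex σ (s.sup' hs f) :=
  Finset.sup'_induction hs f (fun _ hg _ hh => hg.sup hh) hf

theorem stronglyConvex_quadratic (σ c : ℝ) (u y : H) :
    StronglyConvex σ fun x => c + inner ℝ u (x - y) + σ / 2 * ‖x - y‖ ^ 2 := by
  have hlin : (fun x => c + inner ℝ u (x - y) + σ / 2 * ‖x - y‖ ^ 2 - σ / 2 * ‖x‖ ^ 2) =
      fun x => inner ℝ (u - σ • y) x + (c - inner ℝ u y + σ / 2 * ‖y‖ ^ 2) := by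
    funext x
    rw [norm_sub_sq_real, inner_sub_right, inner_sub_left, real_inner_smul_left,
      real_inner_comm x y]
    ring
  unfold StronglyConvex
  rw [hlin]
  exact ((innerₛₗ ℝ (u - σ • y)).convexOn convex_univ).add_const _

theorem exists_continuous_stronglyConvex_interpolant {ι : Type*} [Fintype ι] (hσ : 0 ≤ σ)
    {y : ι → H} {F : ι → ℝ} {u : ι → H}
    (h : ∀ i j, F j + inner ℝ (u j) (y i - y j) + σ / 2 * ‖y i - y j‖ ^ 2 ≤ F i) :
    ∃ f : H → ℝ, Continuous f ∧ StronglyConvex σ f ∧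
      ∀ i, f (y i) = F i ∧ IsSubgradientAt f (u i) (y i) := by
  rcases isEmpty_or_nonempty ι with hι | hι
  · exact ⟨fun x => σ / 2 * ‖x‖ ^ 2, by fun_prop,
      (convexOn_const 0 convex_univ).congr fun x _ => (sub_self _).symm, isEmptyElim⟩
  set φ : ι → H → ℝ := fun j x => F j + inner ℝ (u j) (x - y j) + σ / 2 * ‖x - y j‖ ^ 2
  set f := Finset.univ.sup' Finset.univ_nonempty φ with hf_def
  refine ⟨f, Continuous.finset_sup' _ fun j _ => by fun_prop,
    StronglyConvex.finset_sup' _ fun j _ => stronglyConvex_quadratic σ (F j) (u j) (y j),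
    fun i => ?_⟩
  have hφ_le (z : H) : φ i z ≤ f z := Finset.le_sup' φ (Finset.mem_univ i) z
  have hf_eq : f (y i) = F i := by
    refine le_antisymm ?_ (by simpa [φ] using hφ_le (y i))
    rw [hf_def, Finset.sup'_apply]
    exact Finset.sup'_le _ _ fun j _ => h i j
  refine ⟨hf_eq, fun z => ?_⟩
  calc f (y i) + inner ℝ (u i) (z - y i) ≤ φ i z := by
        rw [hf_eq]; exact le_add_of_nonneg_right (by positivity)
    _ ≤ f z := hφ_le z

end StronglyConvex

/-- Interpolation theorem for the class of lower semicontinuous `σ`-strongly convex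
functions on a real Hilbert space (the case `β = +∞`, with a real-valued
interpolating function). -/
theorem interpolation_lsc_strongly_convex
    {H : Type*} [NormedAddCommGroup H] [InnerProductSpace ℝ H]
    {ι : Type*} [Fintype ι]
    (σ : ℝ) (hσ : 0 ≤ σ)
    (y : ι → H) (F : ι → ℝ) (u : ι → H) :
    (∃ f : H → ℝ, LowerSemicontinuous f ∧ StronglyConvex σ f ∧
        ∀ i, f (y i) = F i ∧ IsSubgradientAt f (u i) (y i)) ↔
      ∀ i j, F j + (inner ℝ (u j) (y i - y j) : ℝ) + σ / 2 * ‖y i - y j‖ ^ 2 ≤ F i := by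
  constructor
  · rintro ⟨f, -, hf, hinterp⟩ i j
    simpa only [(hinterp i).1, (hinterp j).1] using hf.add_inner_add_sq_le (hinterp j).2 (y i)
  · intro h
    obtain ⟨f, hcont, hf, hinterp⟩ := exists_continuous_stronglyConvex_interpolant hσ h
    exact ⟨f, hcont.lowerSemicontinuous, hf, hinterp⟩
end

section
/- Suppose H ≠ {0} and the algorithm has the fixed-point encoding property, i.e. for every choice of f_i ∈ F_{σ_i,β_i}(H) (i = 1,…,m): (a) whenever y⋆ ∈ H satisfies 0 ∈ Σ_{i=1}^m ∂f_i(y⋆), there exist x⋆ ∈ H^n, u⋆ ∈ H^m and F⋆ ∈ ℝ^m such that (x⋆, u⋆, (y⋆,…,y⋆), F⋆) is a fixed point with Σ_{i=1}^m u⋆_i = 0; and (b) every fixed point (x⋆, u⋆, y⋆, F⋆) satisfies y⋆_1 = … = y⋆_m and Σ_{i=1}^m u⋆_i = 0. Then Assumption 1 holds. -/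
open scoped ENNReal
open Matrix

/-- Membership in the function class `F_{σ,β}(H)`. -/
def MemFClass {H : Type*} [NormedAddCommGroup H] [InnerProductSpace ℝ H]
    [CompleteSpace H] (σ : ℝ) (β : ℝ≥0∞) (f : H → ℝ) : Prop :=
  StronglyConvex σ f ∧ (β ≠ ⊤ → IsSmoothWith β.toReal f) ∧
    (β = ⊤ → LowerSemicontinuous f)

/-- `(M ⊗ Id) z` for a real matrix `M` acting on tuples of Hilbert-space vectors. -/
def matVecH {H : Type*} [AddCommGroup H] [Module ℝ H] {p q : Type*} [Fintype q]
    (M : Matrix p q ℝ) (z : q → H) : p → H :=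
  fun i => ∑ j, M i j • z j

/-- The point `(x, u, y, F)` is algorithm-consistent for `f`. -/
def AlgConsistent {H : Type*} [NormedAddCommGroup H] [InnerProductSpace ℝ H]
    {n m : ℕ} (C : Matrix (Fin m) (Fin n) ℝ) (D : Matrix (Fin m) (Fin m) ℝ)
    (f : Fin m → H → ℝ) (x : Fin n → H) (u y : Fin m → H) (F : Fin m → ℝ) : Prop :=
  y = matVecH C x + matVecH D u ∧ (∀ i, IsSubgradientAt (f i) (u i) (y i)) ∧
    ∀ i, F i = f i (y i)

/-- `(x, u, y, F)` is a fixed point of the algorithm. -/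
def IsFixedPoint {H : Type*} [NormedAddCommGroup H] [InnerProductSpace ℝ H]
    {n m : ℕ} (A : Matrix (Fin n) (Fin n) ℝ) (B : Matrix (Fin n) (Fin m) ℝ)
    (C : Matrix (Fin m) (Fin n) ℝ) (D : Matrix (Fin m) (Fin m) ℝ)
    (f : Fin m → H → ℝ) (x : Fin n → H) (u y : Fin m → H) (F : Fin m → ℝ) : Prop :=
  x = matVecH A x + matVecH B u ∧ AlgConsistent C D f x u y F

/-- `(xp, up, yp, Fp)` is a successor of an algorithm-consistent point with data `(x, u)`. -/
def IsSuccessor {H : Type*} [NormedAddCommGroup H] [InnerProductSpace ℝ H]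
    {n m : ℕ} (A : Matrix (Fin n) (Fin n) ℝ) (B : Matrix (Fin n) (Fin m) ℝ)
    (C : Matrix (Fin m) (Fin n) ℝ) (D : Matrix (Fin m) (Fin m) ℝ)
    (f : Fin m → H → ℝ) (x : Fin n → H) (u : Fin m → H)
    (xp : Fin n → H) (up yp : Fin m → H) (Fp : Fin m → ℝ) : Prop :=
  xp = matVecH A x + matVecH B u ∧ AlgConsistent C D f xp up yp Fp

/-- The matrix `N = [I_{m−1}; −𝟏ᵀ] ∈ ℝ^{m×(m−1)}`. -/
def Nmat (m : ℕ) : Matrix (Fin m) (Fin (m - 1)) ℝ :=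
  Matrix.of fun i j => if (i : ℕ) = (j : ℕ) then 1 else if (i : ℕ) = m - 1 then -1 else 0

/-- Assumption 1: the range and null-space conditions on `(A, B, C, D)`. -/
def Assumption1 {n m : ℕ} (A : Matrix (Fin n) (Fin n) ℝ) (B : Matrix (Fin n) (Fin m) ℝ)
    (C : Matrix (Fin m) (Fin n) ℝ) (D : Matrix (Fin m) (Fin m) ℝ) : Prop :=
  LinearMap.range (Matrix.fromBlocks (B * Nmat m) 0 (D * Nmat m)
      (Matrix.of fun (_ : Fin m) (_ : Fin 1) => (-1 : ℝ))).mulVecLin ≤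
    LinearMap.range (Matrix.fromRows (1 - A) (-C)).mulVecLin ∧
  LinearMap.ker (Matrix.fromCols (1 - A) (-B)).mulVecLin ≤
    LinearMap.ker (Matrix.fromBlocks ((Nmat m)ᵀ * C) ((Nmat m)ᵀ * D) 0
      (Matrix.of fun (_ : Fin 1) (_ : Fin m) => (1 : ℝ))).mulVecLin

/-- Assumption 2: `D` lower triangular with nonpositive diagonal, and for each `i`
either `β_i < +∞` or `D_{ii} < 0`. -/
def Assumption2 {m : ℕ} (β : Fin m → ℝ≥0∞) (D : Matrix (Fin m) (Fin m) ℝ) : Prop :=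
  (∀ i j : Fin m, (i : ℕ) < (j : ℕ) → D i j = 0) ∧ (∀ i, D i i ≤ 0) ∧
    ∀ i, β i ≠ ⊤ ∨ D i i < 0


/-!
The range and null-space conditions of Assumption 1 follow from two properties of the scalar
fixed points `x = A x + B u` (`x ∈ ℝⁿ`, `u ∈ ℝᵐ`): for every level `c` and every `u` with zero
sum there is one with output `C x + D u = c 𝟏`, and every one has constant output and `u` with
zero sum. The encoding property transfers both from `H` to `ℝ` through the quadratics
`fᵢ z = ⟪cᵢ, z⟫ + σᵢ/2 ‖z‖²`, which lie in `F_{σᵢ,βᵢ}` and whose only subgradient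
at `y` is `cᵢ + σᵢ y`: with a unit vector `e`, scalar fixed points tensored with `e` are fixed
points of the algorithm, and conversely the subgradients of a fixed point with output on `ℝ e`
are multiples of `e`, so that pairing with `e` yields a scalar fixed point.
-/

open scoped RealInnerProductSpace

section MatVecH

variable {H K : Type*} [AddCommGroup H] [Module ℝ H] [AddCommGroup K] [Module ℝ K]
  {p q : Type*} [Fintype q]

lemma map_matVecH (L : H →ₗ[ℝ] K) (M : Matrix p q ℝ) (x : q → H) (i : p) :
    L (matVecH M x i) = matVecH M (fun j => L (x j)) i := by
  simp [matVecH]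

lemma matVecH_eq_mulVec (M : Matrix p q ℝ) (v : q → ℝ) : matVecH M v = M *ᵥ v := by
  ext i
  simp [matVecH, mulVec, dotProduct]

lemma matVecH_smul_const (M : Matrix p q ℝ) (v : q → ℝ) (e : H) :
    matVecH M (fun j => v j • e) = fun i => (M *ᵥ v) i • e := by
  funext i
  simpa [matVecH_eq_mulVec] using (map_matVecH (LinearMap.toSpanSingleton ℝ H e) M v i).symm

end MatVecH

lemma inner_matVecH {H : Type*} [NormedAddCommGroup H] [InnerProductSpace ℝ H]
    {p q : Type*} [Fintype q] (e : H) (M : Matrix p q ℝ) (x : q → H) (i : p) :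
    ⟪e, matVecH M x i⟫ = (M *ᵥ fun j => ⟪e, x j⟫) i := by
  simpa [matVecH_eq_mulVec] using map_matVecH (innerₛₗ ℝ e) M x i

lemma one_vecMul_Nmat (m : ℕ) : (1 : Fin m → ℝ) ᵥ* Nmat m = 0 := by
  funext j
  have hj : (j : ℕ) ≠ m - 1 := j.isLt.ne
  have hsplit : ∀ k : ℕ, (if k = j then (1 : ℝ) else if k = m - 1 then -1 else 0) =
      (if k = j then 1 else 0) + (if k = m - 1 then -1 else 0) := by
    intro k
    split_ifs <;> simp_all
  simp only [vecMul, dotProduct, Nmat, of_apply, Pi.one_apply, one_mul, Pi.zero_apply]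
  rw [Fin.sum_univ_eq_sum_range (fun k => if k = j then (1 : ℝ) else if k = m - 1 then -1 else 0),
    Finset.sum_congr rfl fun k _ => hsplit k, Finset.sum_add_distrib, Finset.sum_ite_eq',
    Finset.sum_ite_eq']
  simp only [Finset.mem_range]
  rw [if_pos (by omega), if_pos (by omega)]
  norm_num

lemma sum_Nmat_mulVec {m : ℕ} (w : Fin (m - 1) → ℝ) : ∑ i, (Nmat m *ᵥ w) i = 0 := by
  rw [← one_dotProduct, dotProduct_mulVec, one_vecMul_Nmat, zero_dotProduct]

lemma Nmat_transpose_mulVec_eq_zero {m : ℕ} {y : Fin m → ℝ} (hy : ∀ i k, y i = y k) :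
    (Nmat m)ᵀ *ᵥ y = 0 := by
  funext j
  have i₀ : Fin m := ⟨0, by have := j.isLt; omega⟩
  have hy_const : y = y i₀ • 1 := funext fun i => by simp [hy i i₀]
  rw [hy_const, mulVec_transpose, smul_vecMul, one_vecMul_Nmat, smul_zero]

section LinQuad

variable {H : Type*} [NormedAddCommGroup H] [InnerProductSpace ℝ H]

noncomputable def linQuad (c : H) (σ : ℝ) (z : H) : ℝ := ⟪c, z⟫ + σ / 2 * ‖z‖ ^ 2

lemma linQuad_add (c : H) (σ : ℝ) (y w : H) :
    linQuad c σ (y + w) = linQuad c σ y + ⟪c + σ • y, w⟫ + σ / 2 * ‖w‖ ^ 2 := by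
  simp only [linQuad, norm_add_sq_real, inner_add_left, inner_add_right, real_inner_smul_left]
  ring

lemma isSubgradientAt_linQuad_iff {c u y : H} {σ : ℝ} (hσ : 0 ≤ σ) :
    IsSubgradientAt (linQuad c σ) u y ↔ u = c + σ • y := by
  refine ⟨fun hu => ?_, ?_⟩
  · -- test the inequality at `y + t v`, where `v = u - ∇f y` and `σ t ≤ 1`
    set v := u - (c + σ • y)
    set t := 1 / (σ + 1)
    have ht : 0 < t := by positivity
    have htσ : σ * t ≤ 1 := by
      rw [mul_one_div, div_le_one (by positivity)]
      linarith
    have h := hu (y + t • v)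
    rw [linQuad_add, add_sub_cancel_left, real_inner_smul_right, real_inner_smul_right, norm_smul,
      Real.norm_of_nonneg ht.le] at h
    have huv : ⟪u, v⟫ = ⟪c + σ • y, v⟫ + ‖v‖ ^ 2 := by
      rw [← real_inner_self_eq_norm_sq, ← inner_add_left, add_sub_cancel]
    have hvt : t * ‖v‖ ^ 2 ≤ σ / 2 * t * (t * ‖v‖ ^ 2) := by
      rw [huv, mul_pow] at h
      linarith
    have hv : ‖v‖ ^ 2 ≤ 0 := by
      nlinarith [mul_le_mul_of_nonneg_right htσ (by positivity : 0 ≤ t * ‖v‖ ^ 2)]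
    rw [← sub_eq_zero, ← norm_eq_zero]
    exact pow_eq_zero_iff two_ne_zero |>.mp (le_antisymm hv (sq_nonneg _))
  · rintro rfl z
    have h := linQuad_add c σ y (z - y)
    rw [add_sub_cancel] at h
    rw [h]
    nlinarith [sq_nonneg ‖z - y‖]

variable [CompleteSpace H]

lemma hasGradientAt_linQuad (c : H) (σ : ℝ) (x : H) :
    HasGradientAt (linQuad c σ) (c + σ • x) x := by
  rw [hasGradientAt_iff_hasFDerivAt]
  refine (((innerSL ℝ c).hasFDerivAt).add
    ((hasStrictFDerivAt_norm_sq x).hasFDerivAt.const_mul (σ / 2))).congr_fderiv ?_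
  ext w
  simp only [_root_.add_apply, coe_innerSL_apply, _root_.smul_apply,
    nsmul_eq_mul, Nat.cast_ofNat, smul_eq_mul, map_add, map_smul,
    InnerProductSpace.toDual_apply_apply, add_right_inj]
  ring

lemma memFClass_linQuad (c : H) {σ : ℝ} {β : ℝ≥0∞} (hσ : 0 ≤ σ) (hσβ : ENNReal.ofReal σ < β) :
    MemFClass σ β (linQuad c σ) := by
  refine ⟨?_, fun hβ => ⟨fun x => (hasGradientAt_linQuad c σ x).differentiableAt, fun x y => ?_⟩,
    fun _ => ?_⟩
  · have hlin : (fun x => linQuad c σ x - σ / 2 * ‖x‖ ^ 2) = innerₛₗ ℝ c := by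
      ext x
      simp [linQuad]
    rw [StronglyConvex, hlin]
    exact (innerₛₗ ℝ c).convexOn convex_univ
  · rw [(hasGradientAt_linQuad c σ x).gradient, (hasGradientAt_linQuad c σ y).gradient,
      add_sub_add_left_eq_sub, ← smul_sub, norm_smul, Real.norm_of_nonneg hσ]
    exact mul_le_mul_of_nonneg_right ((ENNReal.ofReal_lt_iff_lt_toReal hσ hβ).mp hσβ).le
      (norm_nonneg _)
  · exact Continuous.lowerSemicontinuous (by unfold linQuad; fun_prop)

end LinQuad

section ScalarFixedPoints

variable {n m : ℕ} {A : Matrix (Fin n) (Fin n) ℝ} {B : Matrix (Fin n) (Fin m) ℝ}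
  {C : Matrix (Fin m) (Fin n) ℝ} {D : Matrix (Fin m) (Fin m) ℝ}

lemma range_le_range_of_exists_fixedPoint
    (h : ∀ (c : ℝ) (u : Fin m → ℝ), ∑ i, u i = 0 →
      ∃ x, x = A *ᵥ x + B *ᵥ u ∧ C *ᵥ x + D *ᵥ u = fun _ => c) :
    LinearMap.range (fromBlocks (B * Nmat m) 0 (D * Nmat m)
        (of fun (_ : Fin m) (_ : Fin 1) => (-1 : ℝ))).mulVecLin ≤
      LinearMap.range (fromRows (1 - A) (-C)).mulVecLin := by
  rintro _ ⟨q, rfl⟩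
  obtain ⟨x, hx, hy⟩ := h (q (Sum.inr 0)) (Nmat m *ᵥ (q ∘ Sum.inl)) (sum_Nmat_mulVec _)
  refine ⟨x, ?_⟩
  have hc : (of fun (_ : Fin m) (_ : Fin 1) => (-1 : ℝ)) *ᵥ (q ∘ Sum.inr) =
      fun _ => -q (Sum.inr 0) := by
    ext
    simp [mulVec, dotProduct]
  simp only [mulVecLin_apply, fromRows_mulVec, fromBlocks_mulVec, ← mulVec_mulVec, zero_mulVec,
    add_zero, hc, sub_mulVec, one_mulVec, neg_mulVec]
  congr 1
  · exact sub_eq_of_eq_add' hx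
  · ext i
    have := congrFun hy i
    simp only [Pi.add_apply, Pi.neg_apply] at this ⊢
    linarith

lemma ker_le_ker_of_fixedPoint_optimal
    (h : ∀ x u, x = A *ᵥ x + B *ᵥ u →
      (∀ i k, (C *ᵥ x + D *ᵥ u) i = (C *ᵥ x + D *ᵥ u) k) ∧ ∑ i, u i = 0) :
    LinearMap.ker (fromCols (1 - A) (-B)).mulVecLin ≤
      LinearMap.ker (fromBlocks ((Nmat m)ᵀ * C) ((Nmat m)ᵀ * D) 0
        (of fun (_ : Fin 1) (_ : Fin m) => (1 : ℝ))).mulVecLin := by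
  intro v hv
  rw [LinearMap.mem_ker, mulVecLin_apply, fromCols_mulVec, sub_mulVec, one_mulVec, neg_mulVec,
    ← sub_eq_add_neg, sub_eq_zero] at hv
  obtain ⟨hy, hu⟩ := h _ _ (eq_add_of_sub_eq' hv)
  have hsum : (of fun (_ : Fin 1) (_ : Fin m) => (1 : ℝ)) *ᵥ (v ∘ Sum.inr) = 0 := by
    ext
    simpa [mulVec, dotProduct] using hu
  rw [LinearMap.mem_ker, mulVecLin_apply, fromBlocks_mulVec, ← mulVec_mulVec, ← mulVec_mulVec,
    ← mulVec_add, Nmat_transpose_mulVec_eq_zero hy, zero_mulVec, zero_add, hsum, Sum.elim_zero_zero]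

end ScalarFixedPoints

section Encoding

variable {H : Type*} [NormedAddCommGroup H] [InnerProductSpace ℝ H] {n m : ℕ}
  (A : Matrix (Fin n) (Fin n) ℝ) (B : Matrix (Fin n) (Fin m) ℝ)
  (C : Matrix (Fin m) (Fin n) ℝ) (D : Matrix (Fin m) (Fin m) ℝ)

def EncodesMinimizers (f : Fin m → H → ℝ) : Prop :=
  ∀ ystar : H, (∃ u : Fin m → H, (∀ i, IsSubgradientAt (f i) (u i) ystar) ∧ ∑ i, u i = 0) →
    ∃ (xs : Fin n → H) (us : Fin m → H) (Fs : Fin m → ℝ),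
      IsFixedPoint A B C D f xs us (fun _ => ystar) Fs ∧ ∑ i, us i = 0

def FixedPointsAreMinimizers (f : Fin m → H → ℝ) : Prop :=
  ∀ (xs : Fin n → H) (us ys : Fin m → H) (Fs : Fin m → ℝ),
    IsFixedPoint A B C D f xs us ys Fs → (∀ i j, ys i = ys j) ∧ ∑ i, us i = 0

variable [CompleteSpace H] [Nontrivial H] {A B C D} {σ : Fin m → ℝ} {β : Fin m → ℝ≥0∞}

lemma exists_scalar_fixedPoint_of_encodesMinimizers
    (hσβ : ∀ i, 0 ≤ σ i ∧ ENNReal.ofReal (σ i) < β i)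
    (henc : ∀ f : Fin m → H → ℝ, (∀ i, MemFClass (σ i) (β i) (f i)) →
      EncodesMinimizers A B C D f)
    (c : ℝ) (u : Fin m → ℝ) (hu : ∑ i, u i = 0) :
    ∃ x, x = A *ᵥ x + B *ᵥ u ∧ C *ᵥ x + D *ᵥ u = fun _ => c := by
  obtain ⟨e, he⟩ := exists_norm_eq H zero_le_one
  have inner_e_smul (a : ℝ) : ⟪e, a • e⟫ = a := by
    rw [real_inner_smul_right, real_inner_self_eq_norm_sq, he, one_pow, mul_one]
  let f i := linQuad (u i • e - σ i • c • e) (σ i)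
  have hsub (i : Fin m) (v : H) : IsSubgradientAt (f i) v (c • e) ↔ v = u i • e := by
    rw [isSubgradientAt_linQuad_iff (hσβ i).1, sub_add_cancel]
  obtain ⟨xs, us, -, ⟨hx, hy, hus, -⟩, -⟩ :=
    henc f (fun i => memFClass_linQuad _ (hσβ i).1 (hσβ i).2) (c • e)
      ⟨fun i => u i • e, fun i => (hsub i _).2 rfl, by rw [← Finset.sum_smul, hu, zero_smul]⟩
  obtain rfl : us = fun i => u i • e := funext fun i => (hsub i _).1 (hus i)
  refine ⟨fun j => ⟪e, xs j⟫, ?_, ?_⟩ <;> ext i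
  · simpa [inner_add_right, inner_matVecH, matVecH_smul_const, inner_e_smul] using
      congrArg (⟪e, ·⟫) (congrFun hx i)
  · simpa [inner_add_right, inner_matVecH, matVecH_smul_const, inner_e_smul] using
      (congrArg (⟪e, ·⟫) (congrFun hy i)).symm

lemma scalar_fixedPoint_optimal_of_fixedPointsAreMinimizers
    (hσβ : ∀ i, 0 ≤ σ i ∧ ENNReal.ofReal (σ i) < β i)
    (hopt : ∀ f : Fin m → H → ℝ, (∀ i, MemFClass (σ i) (β i) (f i)) →
      FixedPointsAreMinimizers A B C D f)
    (x : Fin n → ℝ) (u : Fin m → ℝ) (hx : x = A *ᵥ x + B *ᵥ u) :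
    (∀ i k, (C *ᵥ x + D *ᵥ u) i = (C *ᵥ x + D *ᵥ u) k) ∧ ∑ i, u i = 0 := by
  obtain ⟨e, he⟩ := exists_ne (0 : H)
  set y := C *ᵥ x + D *ᵥ u
  let f i := linQuad (u i • e - σ i • y i • e) (σ i)
  have hfp : IsFixedPoint A B C D f (fun j => x j • e) (fun i => u i • e) (fun i => y i • e)
      (fun i => f i (y i • e)) := by
    refine ⟨?_, ?_, fun i => ?_, fun _ => rfl⟩
    · ext j
      simpa only [matVecH_smul_const, Pi.add_apply, add_smul] using
        congrArg (· • e) (congrFun hx j)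
    · ext i
      simp only [matVecH_smul_const, Pi.add_apply, add_smul, y]
    · exact (isSubgradientAt_linQuad_iff (hσβ i).1).2 (sub_add_cancel _ _).symm
  obtain ⟨hys, hus⟩ := hopt f (fun i => memFClass_linQuad _ (hσβ i).1 (hσβ i).2) _ _ _ _ hfp
  refine ⟨fun i k => smul_left_injective ℝ he (hys i k), ?_⟩
  rw [← Finset.sum_smul] at hus
  exact (smul_eq_zero.mp hus).resolve_right he

end Encoding

theorem fixed_point_encoding_implies_assumption1_general
    {H : Type*} [NormedAddCommGroup H] [InnerProductSpace ℝ H] [CompleteSpace H]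
    [Nontrivial H]
    {n m : ℕ}
    (A : Matrix (Fin n) (Fin n) ℝ) (B : Matrix (Fin n) (Fin m) ℝ)
    (C : Matrix (Fin m) (Fin n) ℝ) (D : Matrix (Fin m) (Fin m) ℝ)
    (σ : Fin m → ℝ) (β : Fin m → ℝ≥0∞)
    (hσβ : ∀ i, 0 ≤ σ i ∧ ENNReal.ofReal (σ i) < β i)
    (henc : ∀ f : Fin m → H → ℝ, (∀ i, MemFClass (σ i) (β i) (f i)) →
      ((∀ ystar : H,
          (∃ u : Fin m → H, (∀ i, IsSubgradientAt (f i) (u i) ystar) ∧ ∑ i, u i = 0) →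
          ∃ (xs : Fin n → H) (us : Fin m → H) (Fs : Fin m → ℝ),
            IsFixedPoint A B C D f xs us (fun _ => ystar) Fs ∧ ∑ i, us i = 0) ∧
      (∀ (xs : Fin n → H) (us ys : Fin m → H) (Fs : Fin m → ℝ),
          IsFixedPoint A B C D f xs us ys Fs →
            (∀ i j, ys i = ys j) ∧ ∑ i, us i = 0))) :
    Assumption1 A B C D :=
  ⟨range_le_range_of_exists_fixedPoint
      (exists_scalar_fixedPoint_of_encodesMinimizers hσβ fun f hf => (henc f hf).1),
    ker_le_ker_of_fixedPoint_optimal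
      (scalar_fixedPoint_optimal_of_fixedPointsAreMinimizers hσβ fun f hf => (henc f hf).2)⟩

/-- If `H ≠ {0}` and the algorithm has the fixed-point encoding property, then
Assumption 1 holds. -/
theorem fixed_point_encoding_implies_assumption1
    {H : Type*} [NormedAddCommGroup H] [InnerProductSpace ℝ H] [CompleteSpace H]
    [Nontrivial H]
    {n m : ℕ} (hn : 1 ≤ n) (hm : 1 ≤ m)
    (A : Matrix (Fin n) (Fin n) ℝ) (B : Matrix (Fin n) (Fin m) ℝ)
    (C : Matrix (Fin m) (Fin n) ℝ) (D : Matrix (Fin m) (Fin m) ℝ)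
    (σ : Fin m → ℝ) (β : Fin m → ℝ≥0∞)
    (hσβ : ∀ i, 0 ≤ σ i ∧ ENNReal.ofReal (σ i) < β i)
    (henc : ∀ f : Fin m → H → ℝ, (∀ i, MemFClass (σ i) (β i) (f i)) →
      ((∀ ystar : H,
          (∃ u : Fin m → H, (∀ i, IsSubgradientAt (f i) (u i) ystar) ∧ ∑ i, u i = 0) →
          ∃ (xs : Fin n → H) (us : Fin m → H) (Fs : Fin m → ℝ),
            IsFixedPoint A B C D f xs us (fun _ => ystar) Fs ∧ ∑ i, us i = 0) ∧
      (∀ (xs : Fin n → H) (us ys : Fin m → H) (Fs : Fin m → ℝ),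
          IsFixedPoint A B C D f xs us ys Fs →
            (∀ i j, ys i = ys j) ∧ ∑ i, us i = 0))) :
    Assumption1 A B C D :=
  fixed_point_encoding_implies_assumption1_general A B C D σ β hσβ henc
end

section
/- Let H be a real Hilbert space, k and d positive integers with dim H ≥ k, let Q ∈ S^k be symmetric, q ∈ ℝ^d, and let (M_1, a_1), …, (M_r, a_r) be finitely many pairs with M_j ∈ S^k symmetric and a_j ∈ ℝ^d. Then the supremum of ⟨ζ, (Q⊗Id)ζ⟩ + qᵀχ over all ζ ∈ H^k and χ ∈ ℝ^d satisfying a_jᵀχ + ⟨ζ, (M_j⊗Id)ζ⟩ ≤ 0 for all j = 1,…,r, equals the supremum of trace(QG) + qᵀχ over all positive semidefinite G ∈ S^k and χ ∈ ℝ^d satisfying a_jᵀχ + trace(M_j G) ≤ 0 for all j = 1,…,r (both suprema taken in ℝ ∪ {±∞}). -/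
/-- Quadratic form `⟨z, (M ⊗ Id) z⟩ = Σᵢⱼ Mᵢⱼ ⟨zᵢ, zⱼ⟩` on `H^k`. -/
noncomputable def quadFormH {H : Type*} [NormedAddCommGroup H] [InnerProductSpace ℝ H]
    {ι : Type*} [Fintype ι] (M : Matrix ι ι ℝ) (z : ι → H) : ℝ :=
  ∑ i, ∑ j, M i j * (inner ℝ (z i) (z j) : ℝ)

/-! A Gram matrix `(⟨ζᵢ, ζⱼ⟩)ᵢⱼ` is positive semidefinite, and `⟨ζ, (M ⊗ Id) ζ⟩ = trace (M G)` for
`G` the Gram matrix of `ζ`. Conversely, once `H` contains an orthonormal family `e` of size `k`,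
every positive semidefinite `G = Bᵀ B` is the Gram matrix of `ζᵢ = Σₗ Bₗᵢ eₗ`. So `ζ ↦ G` maps
the feasible points of the quadratic problem onto those of the relaxation, preserving the
objective. -/

open scoped ComplexOrder

theorem exists_orthonormal_of_natCast_le_rank {𝕜 E : Type*} [RCLike 𝕜] [NormedAddCommGroup E]
    [InnerProductSpace 𝕜 E] {n : ℕ} (h : (n : Cardinal) ≤ Module.rank 𝕜 E) :
    ∃ e : Fin n → E, Orthonormal 𝕜 e := by
  obtain ⟨s, hs, hli⟩ := le_rank_iff_exists_linearIndependent_finset.mp h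
  let f : Fin n ≃ (s : Set E) := (Fintype.equivFinOfCardEq (by simpa using hs)).symm
  exact ⟨_, InnerProductSpace.gramSchmidtNormed_orthonormal (hli.comp f f.injective)⟩

namespace Matrix

variable {𝕜 E : Type*} [RCLike 𝕜] [NormedAddCommGroup E] [InnerProductSpace 𝕜 E]

theorem gram_sum_smul_orthonormal {ι κ : Type*} [Fintype κ] {e : κ → E} (he : Orthonormal 𝕜 e)
    (B : Matrix κ ι 𝕜) : gram 𝕜 (fun i => ∑ l, B l i • e l) = Bᴴ * B := by
  classical
  ext i j
  simp only [gram_apply, sum_inner, inner_sum, inner_smul_left, inner_smul_right,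
    orthonormal_iff_ite.mp he, mul_ite, mul_one, mul_zero, Finset.sum_ite_eq', Finset.mem_univ,
    if_true, mul_apply, conjTranspose_apply, RCLike.star_def]
  exact Finset.sum_congr rfl fun _ _ => mul_comm _ _

open scoped MatrixOrder in
theorem PosSemidef.exists_gram_eq {ι : Type*} [Fintype ι] {e : ι → E} (he : Orthonormal 𝕜 e)
    {G : Matrix ι ι 𝕜} (hG : G.PosSemidef) : ∃ v : ι → E, gram 𝕜 v = G := by
  classical
  obtain ⟨B, rfl⟩ := CStarAlgebra.nonneg_iff_eq_star_mul_self.mp hG.nonneg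
  exact ⟨_, gram_sum_smul_orthonormal he B⟩

theorem posSemidef_iff_exists_gram_eq {n : ℕ} (h : (n : Cardinal) ≤ Module.rank 𝕜 E)
    {G : Matrix (Fin n) (Fin n) 𝕜} : G.PosSemidef ↔ ∃ v : Fin n → E, gram 𝕜 v = G := by
  obtain ⟨e, he⟩ := exists_orthonormal_of_natCast_le_rank h
  exact ⟨fun hG => hG.exists_gram_eq he, by rintro ⟨v, rfl⟩; exact posSemidef_gram 𝕜 v⟩

theorem trace_mul_gram {H ι : Type*} [NormedAddCommGroup H] [InnerProductSpace ℝ H] [Fintype ι]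
    (M : Matrix ι ι ℝ) (z : ι → H) : trace (M * gram ℝ z) = quadFormH M z := by
  simp only [quadFormH, trace, diag, mul_apply, gram_apply, real_inner_comm]

end Matrix

theorem gram_relaxation_tight_general
    {H : Type*} [NormedAddCommGroup H] [InnerProductSpace ℝ H]
    (k d r : ℕ)
    (hdim : (k : Cardinal) ≤ Module.rank ℝ H)
    (Q : Matrix (Fin k) (Fin k) ℝ)
    (q : Fin d → ℝ)
    (M : Fin r → Matrix (Fin k) (Fin k) ℝ)
    (a : Fin r → Fin d → ℝ) :
    sSup {v : EReal | ∃ (ζ : Fin k → H) (χ : Fin d → ℝ),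
        (∀ j, dotProduct (a j) χ + quadFormH (M j) ζ ≤ 0) ∧
        v = ((quadFormH Q ζ + dotProduct q χ : ℝ) : EReal)} =
      sSup {v : EReal | ∃ (G : Matrix (Fin k) (Fin k) ℝ) (χ : Fin d → ℝ),
        G.PosSemidef ∧
        (∀ j, dotProduct (a j) χ + Matrix.trace (M j * G) ≤ 0) ∧
        v = ((Matrix.trace (Q * G) + dotProduct q χ : ℝ) : EReal)} := by
  congr 1
  ext v
  simp [Matrix.posSemidef_iff_exists_gram_eq (E := H) hdim, Matrix.trace_mul_gram]

/-- Tightness of the Gram-matrix semidefinite relaxation of a quadratically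
constrained quadratic performance estimation problem over a real Hilbert space
of dimension at least `k`: the two suprema (in `ℝ ∪ {±∞} = EReal`) coincide. -/
theorem gram_relaxation_tight
    {H : Type*} [NormedAddCommGroup H] [InnerProductSpace ℝ H]
    (k d r : ℕ) (hk : 0 < k) (hd : 0 < d)
    (hdim : (k : Cardinal) ≤ Module.rank ℝ H)
    (Q : Matrix (Fin k) (Fin k) ℝ) (hQsymm : Q.IsSymm)
    (q : Fin d → ℝ)
    (M : Fin r → Matrix (Fin k) (Fin k) ℝ) (hMsymm : ∀ j, (M j).IsSymm)
    (a : Fin r → Fin d → ℝ) :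
    sSup {v : EReal | ∃ (ζ : Fin k → H) (χ : Fin d → ℝ),
        (∀ j, dotProduct (a j) χ + quadFormH (M j) ζ ≤ 0) ∧
        v = ((quadFormH Q ζ + dotProduct q χ : ℝ) : EReal)} =
      sSup {v : EReal | ∃ (G : Matrix (Fin k) (Fin k) ℝ) (χ : Fin d → ℝ),
        G.PosSemidef ∧
        (∀ j, dotProduct (a j) χ + Matrix.trace (M j * G) ≤ 0) ∧
        v = ((Matrix.trace (Q * G) + dotProduct q χ : ℝ) : EReal)} :=
  gram_relaxation_tight_general k d r hdim Q q M a
end
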